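/- If Π is a proof deduction (in a base B) with conclusion p, then its dual (Π)^D is a refutation deduction (in the dual base (B)^D) with conclusion p; and if Π is a refutation deduction with conclusion p, then (Π)^D is a proof deduction with conclusion p. -/

import Mathlib

/-- Signs: `pos` for proof/assertion, `neg` for refutation/rejection. -/
inductive Sign where
  | pos
  | neg
deriving DecidableEq

/-- The dual of a sign. -/
def Sign.dual : Sign → Sign
  | .pos => .neg
  | .neg => .pos

/-- A premise of an atomic rule: the sign required (proof or refutation), the premise atom,
and the sets of dischargeable atomic proof assumptions and refutation assumptions. -/
structure Premise where
  sign : Sign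
  concl : ℕ
  dischargePf : Set ℕ
  dischargeRf : Set ℕ

/-- An atomic rule: a list of premises, a marking as proof (`pos`) or refutation (`neg`) rule,
and an atomic conclusion. -/
structure AtomicRule where
  prems : List Premise
  sign : Sign
  concl : ℕ

/-- A bilateral atomic system (base) is a set of atomic rules. -/
abbrev Base := Set AtomicRule

/-- Dual of a premise. -/
def Premise.dual (pr : Premise) : Premise :=
  ⟨pr.sign.dual, pr.concl, pr.dischargeRf, pr.dischargePf⟩

/-- Dual of an atomic rule. -/
def AtomicRule.dual (R : AtomicRule) : AtomicRule :=
  ⟨R.prems.map Premise.dual, R.sign.dual, R.concl⟩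

/-- Dual of a base. -/
def Base.dual (B : Base) : Base := AtomicRule.dual '' B

/-- Atomic deductions as trees. -/
inductive Ded where
  | hyp : Sign → ℕ → Ded
  | app : AtomicRule → List Ded → Ded

/-- Dual of an atomic deduction. -/
def Ded.dual : Ded → Ded
  | .hyp s p => .hyp s.dual p
  | .app R ds => .app R.dual (ds.attach.map fun d => Ded.dual d.1)
decreasing_by
  have := List.sizeOf_lt_of_mem d.2
  simp only [Ded.app.sizeOf_spec]
  omega

/-- `ValidDed B d s Γ Δ p`: the deduction tree `d` is a deduction in `B` of `p` of sign `s`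
with open proof assumptions in `Γ` and open refutation assumptions in `Δ`. -/
inductive ValidDed (B : Base) : Ded → Sign → Set ℕ → Set ℕ → ℕ → Prop
  | hypPos {Γ Δ : Set ℕ} {p : ℕ} : p ∈ Γ → ValidDed B (.hyp .pos p) .pos Γ Δ p
  | hypNeg {Γ Δ : Set ℕ} {p : ℕ} : p ∈ Δ → ValidDed B (.hyp .neg p) .neg Γ Δ p
  | app {Γ Δ : Set ℕ} {R : AtomicRule} {ds : List Ded} (hR : R ∈ B)
      (hlen : ds.length = R.prems.length)
      (h : ∀ i : Fin R.prems.length,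
        ValidDed B (ds.get (Fin.cast hlen.symm i)) (R.prems.get i).sign
          (Γ ∪ (R.prems.get i).dischargePf) (Δ ∪ (R.prems.get i).dischargeRf)
          (R.prems.get i).concl) :
      ValidDed B (.app R ds) R.sign Γ Δ R.concl

@[simp]
theorem Ded.dual_hyp (s : Sign) (p : ℕ) : Ded.dual (.hyp s p) = .hyp s.dual p := by
  rw [Ded.dual]

@[simp]
theorem Ded.dual_app (R : AtomicRule) (ds : List Ded) :
    Ded.dual (.app R ds) = .app R.dual (ds.map Ded.dual) := by
  rw [Ded.dual, List.attach_map_val]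

theorem ValidDed.dual {B : Base} {d : Ded} {s : Sign} {Γ Δ : Set ℕ} {p : ℕ}
    (h : ValidDed B d s Γ Δ p) : ValidDed B.dual d.dual s.dual Δ Γ p := by
  induction h with
  | hypPos hp => rw [Ded.dual_hyp]; exact .hypNeg hp
  | hypNeg hp => rw [Ded.dual_hyp]; exact .hypPos hp
  | @app Γ Δ R ds hR hlen _ ih =>
    have hlen' : (ds.map Ded.dual).length = R.dual.prems.length := by
      simpa [AtomicRule.dual] using hlen
    rw [Ded.dual_app]
    refine .app (R := R.dual) ⟨R, hR, rfl⟩ hlen' fun i => ?_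
    simp only [List.get_eq_getElem, Fin.val_cast]
    simpa [AtomicRule.dual, Premise.dual] using ih ⟨i, by simpa [AtomicRule.dual] using i.isLt⟩

theorem dual_of_deduction_flips_sign (B : Base) (d : Ded) (p : ℕ) :
    ((∃ Γ Δ : Set ℕ, ValidDed B d .pos Γ Δ p) →
      ∃ Γ Δ : Set ℕ, ValidDed (Base.dual B) (Ded.dual d) .neg Γ Δ p) ∧
    ((∃ Γ Δ : Set ℕ, ValidDed B d .neg Γ Δ p) →
      ∃ Γ Δ : Set ℕ, ValidDed (Base.dual B) (Ded.dual d) .pos Γ Δ p) :=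
  ⟨fun ⟨Γ, Δ, h⟩ => ⟨Δ, Γ, h.dual⟩, fun ⟨Γ, Δ, h⟩ => ⟨Δ, Γ, h.dual⟩⟩
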